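/- Let A and U be symmetric positive definite n×n matrices and u ∈ ℝⁿ. If there exists ω ∈ (0,1) such that U ⪰ (1/ω)A + (1/(1−ω))uuᵀ, then the ellipsoid {x : xᵀU⁻¹x − 2xᵀU⁻¹u + uᵀU⁻¹u ≤ 1} contains the ellipsoid {x : xᵀA⁻¹x ≤ 1}. -/

import Mathlib

/-!
Write `M = ω⁻¹ A + (1 - ω)⁻¹ u uᵀ` and `z = x - u`. The quadratic form of `U⁻¹` is the Legendre
dual of that of `U`: `zᵀ U⁻¹ z = 2 yᵀ z - yᵀ U y` at `y = U⁻¹ z`. Since `U ⪰ M`, this is at most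
`2 yᵀ x - ω⁻¹ yᵀ A y` plus `-2 uᵀ y - (1 - ω)⁻¹ (uᵀ y)²`. The first term is at most `ω xᵀ A⁻¹ x ≤ ω`
by the same duality for `A`, and the second is at most `1 - ω` by completing the square.
-/

open Matrix

section

variable {n : Type*} [Fintype n]

theorem Matrix.dotProduct_vecMulVec_self_mulVec {R : Type*} [CommSemiring R] (u y : n → R) :
    y ⬝ᵥ (vecMulVec u u *ᵥ y) = (u ⬝ᵥ y) ^ 2 := by
  rw [vecMulVec_mulVec, op_smul_eq_smul, dotProduct_smul, smul_eq_mul, dotProduct_comm, sq]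

theorem Matrix.IsSymm.dotProduct_mulVec_comm {R : Type*} [CommSemiring R] {S : Matrix n n R}
    (hS : S.IsSymm) (x y : n → R) : x ⬝ᵥ (S *ᵥ y) = y ⬝ᵥ (S *ᵥ x) := by
  rw [dotProduct_mulVec, ← mulVec_transpose, hS.eq, dotProduct_comm]

theorem Matrix.IsSymm.dotProduct_mulVec_sub {R : Type*} [CommRing R] {S : Matrix n n R}
    (hS : S.IsSymm) (x u : n → R) :
    (x - u) ⬝ᵥ (S *ᵥ (x - u)) = x ⬝ᵥ (S *ᵥ x) - 2 * (x ⬝ᵥ (S *ᵥ u)) + u ⬝ᵥ (S *ᵥ u) := by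
  rw [mulVec_sub, dotProduct_sub, sub_dotProduct, sub_dotProduct, hS.dotProduct_mulVec_comm u x]
  ring

theorem Matrix.dotProduct_mulVec_le_of_posSemidef_sub {M U : Matrix n n ℝ}
    (h : (U - M).PosSemidef) (y : n → ℝ) : y ⬝ᵥ (M *ᵥ y) ≤ y ⬝ᵥ (U *ᵥ y) := by
  simpa [sub_mulVec, dotProduct_sub] using h.dotProduct_mulVec_nonneg y

variable [DecidableEq n]

theorem Matrix.dotProduct_nonsing_inv_mulVec_eq {R : Type*} [CommRing R] {U : Matrix n n R}
    (hU : IsUnit U.det) (z : n → R) :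
    z ⬝ᵥ (U⁻¹ *ᵥ z) = 2 * ((U⁻¹ *ᵥ z) ⬝ᵥ z) - (U⁻¹ *ᵥ z) ⬝ᵥ (U *ᵥ (U⁻¹ *ᵥ z)) := by
  rw [mulVec_mulVec, mul_nonsing_inv U hU, one_mulVec, dotProduct_comm]
  ring

theorem Matrix.PosDef.two_mul_dotProduct_le {A : Matrix n n ℝ} (hA : A.PosDef) (x y : n → ℝ) :
    2 * (y ⬝ᵥ x) ≤ y ⬝ᵥ (A *ᵥ y) + x ⬝ᵥ (A⁻¹ *ᵥ x) := by
  have h := hA.posSemidef.dotProduct_mulVec_nonneg (y - A⁻¹ *ᵥ x)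
  rw [star_trivial, (isHermitian_iff_isSymm.mp hA.isHermitian).dotProduct_mulVec_sub,
    mulVec_mulVec, mul_nonsing_inv A (hA.isUnit.map detMonoidHom), one_mulVec,
    dotProduct_comm (A⁻¹ *ᵥ x)] at h
  linarith

theorem Matrix.PosDef.two_mul_dotProduct_sub_le_one {A : Matrix n n ℝ} (hA : A.PosDef)
    {ω : ℝ} (hω0 : 0 < ω) (hω1 : ω < 1) {x : n → ℝ} (hx : x ⬝ᵥ (A⁻¹ *ᵥ x) ≤ 1) (u y : n → ℝ) :
    2 * (y ⬝ᵥ (x - u)) - (ω⁻¹ * (y ⬝ᵥ (A *ᵥ y)) + (1 - ω)⁻¹ * (u ⬝ᵥ y) ^ 2) ≤ 1 := by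
  have hAx : 2 * (y ⬝ᵥ x) ≤ ω⁻¹ * (y ⬝ᵥ (A *ᵥ y)) + ω * (x ⬝ᵥ (A⁻¹ *ᵥ x)) := by
    have := mul_le_mul_of_nonneg_left (hA.two_mul_dotProduct_le x (ω⁻¹ • y)) hω0.le
    simp only [smul_dotProduct, mulVec_smul, dotProduct_smul, smul_eq_mul] at this
    field_simp at this ⊢
    linarith
  have hu : -2 * (u ⬝ᵥ y) - (1 - ω)⁻¹ * (u ⬝ᵥ y) ^ 2 ≤ 1 - ω := by
    have h1ω : 0 < 1 - ω := sub_pos.mpr hω1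
    have := div_nonneg (sq_nonneg (u ⬝ᵥ y + (1 - ω))) h1ω.le
    field_simp at this ⊢
    nlinarith
  rw [dotProduct_sub, dotProduct_comm y u]
  linarith [mul_le_of_le_one_right hω0.le hx]

end

theorem stmt8 {n : ℕ} (A U : Matrix (Fin n) (Fin n) ℝ)
    (hA : A.PosDef) (hU : U.PosDef) (u : Fin n → ℝ)
    (h : ∃ ω : ℝ, 0 < ω ∧ ω < 1 ∧
      (U - ((1 / ω) • A + (1 / (1 - ω)) • Matrix.vecMulVec u u)).PosSemidef) :
    {x : Fin n → ℝ | x ⬝ᵥ (A⁻¹ *ᵥ x) ≤ 1} ⊆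
      {x : Fin n → ℝ |
        x ⬝ᵥ (U⁻¹ *ᵥ x) - 2 * (x ⬝ᵥ (U⁻¹ *ᵥ u)) + u ⬝ᵥ (U⁻¹ *ᵥ u) ≤ 1} := by
  obtain ⟨ω, hω0, hω1, hUM⟩ := h
  intro x (hx : x ⬝ᵥ (A⁻¹ *ᵥ x) ≤ 1)
  change _ ≤ (1 : ℝ)
  rw [← (isHermitian_iff_isSymm.mp hU.inv.isHermitian).dotProduct_mulVec_sub,
    dotProduct_nonsing_inv_mulVec_eq (hU.isUnit.map detMonoidHom)]
  set y := U⁻¹ *ᵥ (x - u)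
  have hM : y ⬝ᵥ (((1 / ω) • A + (1 / (1 - ω)) • vecMulVec u u) *ᵥ y)
      = ω⁻¹ * (y ⬝ᵥ (A *ᵥ y)) + (1 - ω)⁻¹ * (u ⬝ᵥ y) ^ 2 := by
    rw [add_mulVec, smul_mulVec, smul_mulVec, dotProduct_add, dotProduct_smul, dotProduct_smul,
      dotProduct_vecMulVec_self_mulVec, smul_eq_mul, smul_eq_mul, one_div, one_div]
  calc 2 * (y ⬝ᵥ (x - u)) - y ⬝ᵥ (U *ᵥ y)
      ≤ 2 * (y ⬝ᵥ (x - u)) - (ω⁻¹ * (y ⬝ᵥ (A *ᵥ y)) + (1 - ω)⁻¹ * (u ⬝ᵥ y) ^ 2) := by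
        rw [← hM]; linarith [dotProduct_mulVec_le_of_posSemidef_sub hUM y]
    _ ≤ 1 := hA.two_mul_dotProduct_sub_le_one hω0 hω1 hx u y
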